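/- arXiv:2306.15657 — 2 statements merged into one kernel-verified Lean document; each statement's English description precedes it below -/
import Mathlib

section
/- If x ≥ y ≥ 0 and Z₁, Z₂ ≥ 0, then (Z₁ + x)/max(Z₁ + x, Z₂ + y) ≥ (Z₁ + y)/max(Z₁ + y, Z₂ + x). -/
theorem stmt0 (x y Z₁ Z₂ : ℝ) (hxy : y ≤ x) (hy : 0 ≤ y) (hZ₁ : 0 ≤ Z₁) (hZ₂ : 0 ≤ Z₂) :
    (Z₁ + y) / max (Z₁ + y) (Z₂ + x) ≤ (Z₁ + x) / max (Z₁ + x) (Z₂ + y) := by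
  have hx : 0 ≤ x := hy.trans hxy
  rcases le_total (Z₂ + y) (Z₁ + x) with h | h
  · rw [max_eq_left h]
    rcases eq_or_lt_of_le (by positivity : (0:ℝ) ≤ Z₁ + x) with h0 | h0
    · have hb : Z₁ + y ≤ 0 := by nlinarith [h0.symm ▸ h]
      have : Z₁ + y = 0 := le_antisymm hb (by positivity)
      simp [this, ← h0]
    · rw [div_self h0.ne']
      exact div_le_one_of_le₀ (le_max_left _ _)
        (le_trans (by positivity) (le_max_left _ _))
  · have h2 : Z₁ + y ≤ Z₂ + x := by linarith
    rw [max_eq_right h2, max_eq_right h]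
    rcases eq_or_lt_of_le (by positivity : (0:ℝ) ≤ Z₂ + y) with h0 | h0
    · have : Z₁ + x = 0 := le_antisymm (h0 ▸ h) (by positivity)
      have hy0 : Z₁ + y = 0 := le_antisymm (by nlinarith) (by positivity)
      simp [this, hy0]
    · have hc : 0 < Z₂ + x := by nlinarith
      rw [div_le_div_iff₀ hc h0]
      nlinarith
end

section
/- Under the top-half approval rule with n voters, m alternatives, and a symmetric distribution D on [0,1], the winning alternative (the one ranked in the top ⌈m/2⌉ positions by the most voters, hence by at least n/2 voters) has expected social welfare at least (1/3) of the maximum expected social welfare over all alternatives. -/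
/-!
The reflection `x ↦ 1 - x` preserves `D` and reverses the order statistics of `m` i.i.d. draws,
so the expected `k`-th smallest draw `e k` satisfies `e k + e (m + 1 - k) = 1`; since `e` is
monotone in `k`, it is `≥ 1/2` in the upper half and `≤ 1/2` in the lower half. A voter who places
`j` among its top `⌈m/2⌉` therefore contributes between `1/2` and `1` to the expected welfare of
`j`, any other voter between `0` and `1/2`: with `z j` such voters,
`z j / 2 ≤ E[SW j] ≤ n / 2 + z j / 2`. Every voter approves `⌈m/2⌉ ≥ m/2` alternatives, so the
counts `z` sum to at least `n m / 2` and the winner has `z w ≥ n / 2`; hence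
`E[SW j] ≤ (n + z w) / 2 ≤ 3 z w / 2 ≤ 3 E[SW w]`.
-/

open MeasureTheory ProbabilityTheory

/-- The `j`-th smallest value (1-indexed) of a list of reals. -/
noncomputable def orderStat (l : List ℝ) (j : ℕ) : ℝ :=
  (l.insertionSort (· ≤ ·)).getD (j - 1) 0

open Set

theorem List.Pairwise.getElem_le_iff_lt_countP {α : Type*} [LinearOrder α] {s : List α}
    (hs : s.Pairwise (· ≤ ·)) (t : α) {k : ℕ} (hk : k < s.length) :
    s[k] ≤ t ↔ k < s.countP (· ≤ t) := by
  induction s generalizing k with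
  | nil => simp at hk
  | cons a s ih =>
    rw [List.pairwise_cons] at hs
    by_cases hat : a ≤ t
    · cases k <;> simp [hat, ih hs.2]
    · have h0 : s.countP (· ≤ t) = 0 :=
        List.countP_eq_zero.2 fun x hx hxt => hat ((hs.1 x hx).trans (by simpa using hxt))
      cases k with
      | zero => simp [hat, h0]
      | succ k => simpa [hat, h0] using ih hs.2 (k := k) (by simpa using hk)

theorem List.countP_ofFn {α : Type*} {m : ℕ} (x : Fin m → α) (p : α → Bool) :
    (List.ofFn x).countP p = (Finset.univ.filter fun i => p (x i)).card := by
  induction m with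
  | zero => simp
  | succ m ih =>
    rw [List.ofFn_succ, List.countP_cons, ih, Finset.card_filter, Finset.card_filter,
      Fin.sum_univ_succ]
    split_ifs <;> simp_all [add_comm]

theorem orderStat_eq_getElem {l : List ℝ} {k : ℕ} (hk₁ : 1 ≤ k) (hk₂ : k ≤ l.length) :
    orderStat l k =
      (l.insertionSort (· ≤ ·))[k - 1]'(by rw [List.length_insertionSort]; omega) := by
  rw [orderStat, List.getD_eq_getElem]

theorem orderStat_le_iff {l : List ℝ} {k : ℕ} (hk₁ : 1 ≤ k) (hk₂ : k ≤ l.length) (t : ℝ) :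
    orderStat l k ≤ t ↔ k ≤ l.countP (· ≤ t) := by
  rw [orderStat_eq_getElem hk₁ hk₂,
    (List.pairwise_insertionSort _ _).getElem_le_iff_lt_countP,
    (List.perm_insertionSort _ _).countP_eq]
  omega

theorem orderStat_mem {l : List ℝ} {k : ℕ} (hk₁ : 1 ≤ k) (hk₂ : k ≤ l.length) :
    orderStat l k ∈ l := by
  rw [orderStat_eq_getElem hk₁ hk₂]
  exact (List.perm_insertionSort _ _).mem_iff.1 (List.getElem_mem _)

theorem orderStat_mono {l : List ℝ} {k k' : ℕ} (hk₁ : 1 ≤ k) (hkk' : k ≤ k')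
    (hk'₂ : k' ≤ l.length) : orderStat l k ≤ orderStat l k' := by
  rw [orderStat_eq_getElem hk₁ (hkk'.trans hk'₂), orderStat_eq_getElem (hk₁.trans hkk') hk'₂]
  exact (List.pairwise_insertionSort _ _).rel_get_of_le (a := ⟨k - 1, _⟩) (b := ⟨k' - 1, _⟩)
    (Fin.mk_le_mk.2 (by omega))

theorem measurable_orderStat_ofFn {m k : ℕ} (hk₁ : 1 ≤ k) (hk₂ : k ≤ m) :
    Measurable fun x : Fin m → ℝ => orderStat (List.ofFn x) k := by
  refine measurable_of_Iic fun t => ?_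
  have hcount : Measurable fun x : Fin m → ℝ => (Finset.univ.filter fun i => x i ≤ t).card := by
    simp only [Finset.card_filter]
    exact Finset.measurable_sum _ fun i _ => Measurable.ite
      (measurableSet_le (measurable_pi_apply i) measurable_const) measurable_const measurable_const
  convert hcount (measurableSet_Ici (a := k)) using 1
  ext x
  simp [orderStat_le_iff hk₁ (by simpa using hk₂ : k ≤ (List.ofFn x).length), List.countP_ofFn]

theorem insertionSort_map_one_sub (l : List ℝ) :
    (l.map (1 - ·)).insertionSort (· ≤ ·) = ((l.insertionSort (· ≤ ·)).map (1 - ·)).reverse := by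
  refine List.Perm.eq_of_pairwise' (List.pairwise_insertionSort _ _) ?_ ?_
  · rw [List.pairwise_reverse, List.pairwise_map]
    exact (List.pairwise_insertionSort _ _).imp fun h => by linarith
  · exact (List.perm_insertionSort _ _).trans
      ((((List.perm_insertionSort _ l).map _).symm).trans (List.reverse_perm _).symm)

theorem orderStat_map_one_sub {l : List ℝ} {k : ℕ} (hk₁ : 1 ≤ k) (hk₂ : k ≤ l.length) :
    orderStat (l.map (1 - ·)) k = 1 - orderStat l (l.length + 1 - k) := by
  rw [orderStat_eq_getElem hk₁ (by simpa using hk₂), orderStat_eq_getElem (by omega) (by omega)]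
  simp only [insertionSort_map_one_sub, List.getElem_reverse, List.getElem_map,
    List.length_map, List.length_insertionSort]
  congr 2
  omega

theorem MeasureTheory.Measure.ext_of_Iic_of_Ici {α : Type*} [TopologicalSpace α]
    [MeasurableSpace α] [SecondCountableTopology α] [LinearOrder α] [OrderTopology α]
    [BorelSpace α] {μ ν : Measure α} [IsFiniteMeasure μ] (c : α)
    (hIic : ∀ a ≤ c, μ (Iic a) = ν (Iic a)) (hIci : ∀ b, c ≤ b → μ (Ici b) = ν (Ici b)) :
    μ = ν := by
  have hle : μ.restrict (Iic c) = ν.restrict (Iic c) := by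
    refine Measure.ext_of_Iic _ _ fun a => ?_
    simp only [Measure.restrict_apply measurableSet_Iic, Iic_inter_Iic]
    exact hIic _ inf_le_right
  have hge : μ.restrict (Ici c) = ν.restrict (Ici c) := by
    refine Measure.ext_of_Ici _ _ fun b => ?_
    simp only [Measure.restrict_apply measurableSet_Ici, Ici_inter_Ici]
    exact hIci _ le_sup_right
  have hgt : μ.restrict (Ioi c) = ν.restrict (Ioi c) := by
    rw [← Measure.restrict_restrict_of_subset Ioi_subset_Ici_self, hge,
      Measure.restrict_restrict_of_subset Ioi_subset_Ici_self]
  rw [← μ.restrict_add_restrict_compl (measurableSet_Iic (a := c)),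
    ← ν.restrict_add_restrict_compl (measurableSet_Iic (a := c)), compl_Iic, hle, hgt]

theorem map_one_sub_eq_self {D : Measure ℝ} [IsFiniteMeasure D]
    (h : ∀ a ≤ 1 / 2, D (Iic a) = D (Ici (1 - a))) : D.map (1 - ·) = D := by
  have hmeas : Measurable fun x : ℝ => 1 - x := measurable_const.sub measurable_id
  refine (Measure.ext_of_Iic_of_Ici (1 / 2) (fun a ha => ?_) fun b hb => ?_).symm
  · rw [Measure.map_apply hmeas measurableSet_Iic, preimage_const_sub_Iic, h a ha]
  · rw [Measure.map_apply hmeas measurableSet_Ici, preimage_const_sub_Ici,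
      h (1 - b) (by linarith), sub_sub_cancel]

theorem measure_Iic_eq_measure_Ici_one_sub {D : Measure ℝ}
    (hsupp : ∀ᵐ x ∂D, x ∈ Icc (0 : ℝ) 1)
    (hsym : ∀ ε ∈ Icc (0 : ℝ) (1 / 2), D {x | x ≤ 1 / 2 - ε} = D {x | 1 / 2 + ε ≤ x}) :
    ∀ a ≤ 1 / 2, D (Iic a) = D (Ici (1 - a)) := by
  intro a ha
  rcases lt_or_ge a 0 with ha₀ | ha₀
  · have hnull : ∀ s ⊆ (Icc (0 : ℝ) 1)ᶜ, D s = 0 := fun s hs => measure_mono_null hs hsupp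
    rw [hnull (Iic a) fun x (hx : x ≤ a) hx' => by linarith [hx'.1],
      hnull (Ici (1 - a)) fun x (hx : 1 - a ≤ x) hx' => by linarith [hx'.2]]
  · have := hsym (1 / 2 - a) ⟨by linarith, by linarith⟩
    rwa [sub_sub_cancel, show (1 : ℝ) / 2 + (1 / 2 - a) = 1 - a by ring] at this

noncomputable def expectedOrderStat (D : Measure ℝ) (m k : ℕ) : ℝ :=
  ∫ x : Fin m → ℝ, orderStat (List.ofFn x) k ∂Measure.pi fun _ => D

section ExpectedOrderStat

variable {D : Measure ℝ} [IsProbabilityMeasure D] {m k : ℕ}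

theorem ae_orderStat_ofFn_mem_Icc (hsupp : ∀ᵐ x ∂D, x ∈ Icc (0 : ℝ) 1) (hk₁ : 1 ≤ k)
    (hk₂ : k ≤ m) :
    ∀ᵐ x ∂Measure.pi fun _ : Fin m => D, orderStat (List.ofFn x) k ∈ Icc (0 : ℝ) 1 := by
  have hcoord : ∀ᵐ x ∂Measure.pi fun _ : Fin m => D, ∀ l, x l ∈ Icc (0 : ℝ) 1 :=
    ae_all_iff.2 fun l => (measurePreserving_eval _ l).quasiMeasurePreserving.ae hsupp
  filter_upwards [hcoord] with x hx
  obtain ⟨l, hl⟩ := List.mem_ofFn.1 (orderStat_mem (l := List.ofFn x) hk₁ (by simpa using hk₂))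
  exact hl ▸ hx l

theorem integrable_orderStat_ofFn (hsupp : ∀ᵐ x ∂D, x ∈ Icc (0 : ℝ) 1) (hk₁ : 1 ≤ k)
    (hk₂ : k ≤ m) :
    Integrable (fun x : Fin m → ℝ => orderStat (List.ofFn x) k) (Measure.pi fun _ => D) := by
  refine .of_bound (measurable_orderStat_ofFn hk₁ hk₂).aestronglyMeasurable 1 ?_
  filter_upwards [ae_orderStat_ofFn_mem_Icc hsupp hk₁ hk₂] with x hx
  rw [Real.norm_of_nonneg hx.1]
  exact hx.2

theorem expectedOrderStat_mem_Icc (hsupp : ∀ᵐ x ∂D, x ∈ Icc (0 : ℝ) 1) (hk₁ : 1 ≤ k)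
    (hk₂ : k ≤ m) : expectedOrderStat D m k ∈ Icc (0 : ℝ) 1 := by
  have hae := ae_orderStat_ofFn_mem_Icc hsupp hk₁ hk₂
  refine ⟨integral_nonneg_of_ae (hae.mono fun x hx => hx.1), ?_⟩
  simpa [expectedOrderStat] using integral_mono_ae (integrable_orderStat_ofFn hsupp hk₁ hk₂)
    (integrable_const 1) (hae.mono fun x hx => hx.2)

theorem expectedOrderStat_mono (hsupp : ∀ᵐ x ∂D, x ∈ Icc (0 : ℝ) 1) {k' : ℕ} (hk₁ : 1 ≤ k)
    (hkk' : k ≤ k') (hk'₂ : k' ≤ m) : expectedOrderStat D m k ≤ expectedOrderStat D m k' :=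
  integral_mono (integrable_orderStat_ofFn hsupp hk₁ (hkk'.trans hk'₂))
    (integrable_orderStat_ofFn hsupp (hk₁.trans hkk') hk'₂)
    fun x => orderStat_mono hk₁ hkk' (by simpa using hk'₂)

theorem expectedOrderStat_add_expectedOrderStat_rev (hsupp : ∀ᵐ x ∂D, x ∈ Icc (0 : ℝ) 1)
    (hrefl : D.map (1 - ·) = D) (hk₁ : 1 ≤ k) (hk₂ : k ≤ m) :
    expectedOrderStat D m k + expectedOrderStat D m (m + 1 - k) = 1 := by
  have hmp : MeasurePreserving (fun (x : Fin m → ℝ) l => 1 - x l)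
      (Measure.pi fun _ => D) (Measure.pi fun _ => D) :=
    measurePreserving_pi _ _ fun _ => ⟨measurable_const.sub measurable_id, hrefl⟩
  have hreflect : expectedOrderStat D m k =
      ∫ x : Fin m → ℝ, 1 - orderStat (List.ofFn x) (m + 1 - k) ∂Measure.pi fun _ => D := by
    have hcomp := integral_map hmp.measurable.aemeasurable (by
      rw [hmp.map_eq]; exact (measurable_orderStat_ofFn hk₁ hk₂).aestronglyMeasurable)
    rw [hmp.map_eq] at hcomp
    rw [expectedOrderStat, hcomp]
    congr 1 with x
    rw [show List.ofFn (fun l => 1 - x l) = (List.ofFn x).map (1 - ·) from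
      (List.map_ofFn ..).symm, orderStat_map_one_sub hk₁ (by simpa using hk₂),
      List.length_ofFn]
  rw [hreflect, integral_sub (integrable_const 1)
    (integrable_orderStat_ofFn hsupp (by omega) (by omega)), expectedOrderStat]
  simp

theorem half_le_expectedOrderStat (hsupp : ∀ᵐ x ∂D, x ∈ Icc (0 : ℝ) 1)
    (hrefl : D.map (1 - ·) = D) (hk₂ : k ≤ m) (hk : m + 1 ≤ 2 * k) :
    1 / 2 ≤ expectedOrderStat D m k := by
  have := expectedOrderStat_add_expectedOrderStat_rev hsupp hrefl (by omega) hk₂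
  have := expectedOrderStat_mono (m := m) hsupp (k := m + 1 - k) (by omega) (by omega) hk₂
  linarith

theorem expectedOrderStat_le_half (hsupp : ∀ᵐ x ∂D, x ∈ Icc (0 : ℝ) 1)
    (hrefl : D.map (1 - ·) = D) (hk₁ : 1 ≤ k) (hk : 2 * k ≤ m) :
    expectedOrderStat D m k ≤ 1 / 2 := by
  have := expectedOrderStat_add_expectedOrderStat_rev (m := m) hsupp hrefl hk₁ (by omega)
  have := expectedOrderStat_mono (m := m) hsupp (k' := m + 1 - k) hk₁ (by omega) (by omega)
  linarith

end ExpectedOrderStat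

section Approval

open Finset

variable {ι : Type*} [Fintype ι] {m : ℕ}

def approvalCount (rank : ι → Equiv.Perm (Fin m)) (j : Fin m) : ℕ :=
  #{i | (rank i j : ℕ) < (m + 1) / 2}

theorem card_filter_perm_val_lt (σ : Equiv.Perm (Fin m)) (c : ℕ) :
    #{j | (σ j : ℕ) < c} = min m c := by
  rw [← Fin.card_filter_val_lt]
  exact card_equiv σ (by simp)

theorem sum_approvalCount (rank : ι → Equiv.Perm (Fin m)) :
    ∑ j, approvalCount rank j = Fintype.card ι * ((m + 1) / 2) := by
  simp only [approvalCount, card_filter]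
  rw [sum_comm]
  simp only [← card_filter, card_filter_perm_val_lt]
  simp [show min m ((m + 1) / 2) = (m + 1) / 2 by omega]

theorem card_le_two_mul_approvalCount (rank : ι → Equiv.Perm (Fin m)) {w : Fin m}
    (hw : ∀ j, approvalCount rank j ≤ approvalCount rank w) :
    Fintype.card ι ≤ 2 * approvalCount rank w := by
  have hsum : ∑ j, approvalCount rank j ≤ m * approvalCount rank w := by
    simpa using sum_le_sum fun j (_ : j ∈ Finset.univ) => hw j
  rw [sum_approvalCount] at hsum
  refine Nat.le_of_mul_le_mul_left ?_ w.pos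
  nlinarith [Nat.mul_le_mul_right (Fintype.card ι) (show m ≤ 2 * ((m + 1) / 2) by omega)]

end Approval

section Welfare

open Finset

variable {D : Measure ℝ} [IsProbabilityMeasure D] {ι : Type*} [Fintype ι] {m : ℕ}

theorem expectedOrderStat_sub_le (hsupp : ∀ᵐ x ∂D, x ∈ Set.Icc (0 : ℝ) 1)
    (hrefl : D.map (1 - ·) = D) {r : ℕ} (hr : r < m) :
    expectedOrderStat D m (m - r) ≤ 1 / 2 + if r < (m + 1) / 2 then 1 / 2 else 0 := by
  split_ifs
  · linarith [(expectedOrderStat_mem_Icc (D := D) (m := m) hsupp (k := m - r) (by omega)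
      (by omega)).2]
  · simpa using expectedOrderStat_le_half hsupp hrefl (by omega) (by omega)

theorem le_expectedOrderStat_sub (hsupp : ∀ᵐ x ∂D, x ∈ Set.Icc (0 : ℝ) 1)
    (hrefl : D.map (1 - ·) = D) {r : ℕ} (hr : r < m) :
    (if r < (m + 1) / 2 then 1 / 2 else 0) ≤ expectedOrderStat D m (m - r) := by
  split_ifs
  · exact half_le_expectedOrderStat hsupp hrefl (by omega) (by omega)
  · exact (expectedOrderStat_mem_Icc hsupp (by omega) (by omega)).1

theorem sum_expectedOrderStat_le (hsupp : ∀ᵐ x ∂D, x ∈ Set.Icc (0 : ℝ) 1)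
    (hrefl : D.map (1 - ·) = D) (rank : ι → Equiv.Perm (Fin m)) (j : Fin m) :
    ∑ i, expectedOrderStat D m (m - rank i j) ≤
      Fintype.card ι / 2 + approvalCount rank j / 2 := by
  calc ∑ i, expectedOrderStat D m (m - rank i j)
      ≤ ∑ i, (1 / 2 + if (rank i j : ℕ) < (m + 1) / 2 then (1 / 2 : ℝ) else 0) :=
        sum_le_sum fun i _ => expectedOrderStat_sub_le hsupp hrefl (rank i j).isLt
    _ = Fintype.card ι / 2 + approvalCount rank j / 2 := by
        simp only [one_div, sum_add_distrib, sum_const, card_univ, nsmul_eq_mul, ← sum_filter,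
          approvalCount]
        ring

theorem approvalCount_div_two_le_sum_expectedOrderStat (hsupp : ∀ᵐ x ∂D, x ∈ Set.Icc (0 : ℝ) 1)
    (hrefl : D.map (1 - ·) = D) (rank : ι → Equiv.Perm (Fin m)) (j : Fin m) :
    (approvalCount rank j : ℝ) / 2 ≤ ∑ i, expectedOrderStat D m (m - rank i j) := by
  calc (approvalCount rank j : ℝ) / 2
      = ∑ i, if (rank i j : ℕ) < (m + 1) / 2 then (1 / 2 : ℝ) else 0 := by
        simp only [approvalCount, one_div, ← sum_filter, sum_const, nsmul_eq_mul]
        ring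
    _ ≤ ∑ i, expectedOrderStat D m (m - rank i j) :=
        sum_le_sum fun i _ => le_expectedOrderStat_sub hsupp hrefl (rank i j).isLt

end Welfare

theorem map_eq_pi_of_iIndepFun {Ω ι β : Type*} [MeasurableSpace Ω] [MeasurableSpace β]
    [Fintype ι] {μ : Measure Ω} {X : ι → Ω → β} {ν : Measure β} [IsProbabilityMeasure ν]
    (hind : iIndepFun X μ) (hlaw : ∀ i, μ.map (X i) = ν) :
    μ.map (fun ω i => X i ω) = Measure.pi fun _ => ν := by
  rw [hind.map_fun_eq_pi_map fun i => .of_map_ne_zero (by rw [hlaw i]; exact NeZero.ne ν)]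
  simp_rw [hlaw]

theorem integral_sum_orderStat {Ω ι : Type*} [MeasurableSpace Ω] [Fintype ι] {μ : Measure Ω}
    {D : Measure ℝ} [IsProbabilityMeasure D] {m : ℕ} {X : ι → Ω → Fin m → ℝ}
    (hsupp : ∀ᵐ x ∂D, x ∈ Set.Icc (0 : ℝ) 1) (hX : ∀ i, μ.map (X i) = Measure.pi fun _ => D)
    {k : ι → ℕ} (hk₁ : ∀ i, 1 ≤ k i) (hk₂ : ∀ i, k i ≤ m) :
    ∫ ω, ∑ i, orderStat (List.ofFn (X i ω)) (k i) ∂μ = ∑ i, expectedOrderStat D m (k i) := by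
  have hXmeas : ∀ i, AEMeasurable (X i) μ := fun i =>
    .of_map_ne_zero (by rw [hX i]; exact NeZero.ne _)
  have hmeas : ∀ i, AEStronglyMeasurable (fun x => orderStat (List.ofFn x) (k i)) (μ.map (X i)) :=
    fun i => by rw [hX i]; exact (measurable_orderStat_ofFn (hk₁ i) (hk₂ i)).aestronglyMeasurable
  have hint : ∀ i, Integrable (fun ω => orderStat (List.ofFn (X i ω)) (k i)) μ := fun i =>
    (integrable_map_measure (hmeas i) (hXmeas i)).1 (by
      rw [hX i]; exact integrable_orderStat_ofFn hsupp (hk₁ i) (hk₂ i))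
  rw [integral_finsetSum _ fun i _ => hint i]
  refine Finset.sum_congr rfl fun i _ => ?_
  rw [expectedOrderStat, ← hX i, integral_map (hXmeas i) (hmeas i)]

/-- `rank i j = 0` means voter `i` ranks alternative `j` first, so that `j` receives voter `i`'s
largest draw. -/
theorem stmt13_general {Ω : Type*} [MeasurableSpace Ω] (μ : Measure Ω)
    (n m : ℕ)
    (V : Fin n → Fin m → Ω → ℝ)
    (hindep : iIndepFun (fun p : Fin n × Fin m => V p.1 p.2) μ)
    (D : Measure ℝ) [IsProbabilityMeasure D] (hlaw : ∀ i l, μ.map (V i l) = D)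
    (hsupp : D (Set.Icc (0 : ℝ) 1)ᶜ = 0)
    (hsym : ∀ ε ∈ Set.Icc (0 : ℝ) (1 / 2),
      D {x | x ≤ 1 / 2 - ε} = D {x | 1 / 2 + ε ≤ x})
    (rank : Fin n → Equiv.Perm (Fin m))
    (SW : Fin m → Ω → ℝ)
    (hSW : ∀ j ω, SW j ω =
      ∑ i, orderStat (List.ofFn fun l => V i l ω) (m - (rank i j : ℕ)))
    (w : Fin m)
    (hw : ∀ j, (Finset.univ.filter fun i => ((rank i) j : ℕ) < (m + 1) / 2).card ≤
      (Finset.univ.filter fun i => ((rank i) w : ℕ) < (m + 1) / 2).card) :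
    ∀ j, ∫ ω, SW j ω ∂μ ≤ 3 * ∫ ω, SW w ω ∂μ := by
  intro j
  have hrefl : D.map (1 - ·) = D :=
    map_one_sub_eq_self (measure_Iic_eq_measure_Ici_one_sub hsupp hsym)
  have hrow : ∀ i, μ.map (fun ω l => V i l ω) = Measure.pi fun _ => D := fun i =>
    map_eq_pi_of_iIndepFun
      (hindep.precomp (g := fun l => (i, l)) fun _ _ h => (Prod.ext_iff.1 h).2) (hlaw i)
  have hwelfare : ∀ j, ∫ ω, SW j ω ∂μ = ∑ i, expectedOrderStat D m (m - rank i j) := fun j => by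
    simp_rw [hSW]
    exact integral_sum_orderStat hsupp hrow (fun i => Nat.sub_pos_of_lt (rank i j).isLt)
      fun _ => Nat.sub_le _ _
  have hupper := sum_expectedOrderStat_le hsupp hrefl rank j
  have hlower := approvalCount_div_two_le_sum_expectedOrderStat hsupp hrefl rank w
  have hmajority : (n : ℝ) ≤ 2 * approvalCount rank w := by
    exact_mod_cast (by simpa using card_le_two_mul_approvalCount rank hw)
  have hj : (approvalCount rank j : ℝ) ≤ approvalCount rank w := by exact_mod_cast hw j
  rw [hwelfare, hwelfare]
  simp only [Fintype.card_fin] at hupper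
  linarith

/-- Top-half approval: with utilities i.i.d. from a symmetric distribution on `[0,1]`,
the alternative `w` ranked among the top `⌈m/2⌉` positions by the most voters has
expected social welfare at least a third of that of any alternative.
`rank i j = 0` means voter `i` ranks alternative `j` first (so `j` receives voter
`i`'s largest draw). -/
theorem stmt13 {Ω : Type*} [MeasurableSpace Ω] (μ : Measure Ω) [IsProbabilityMeasure μ]
    (n m : ℕ) (hn : 0 < n) (hm : 0 < m)
    (V : Fin n → Fin m → Ω → ℝ) (hmeas : ∀ i l, Measurable (V i l))
    (hindep : iIndepFun (fun p : Fin n × Fin m => V p.1 p.2) μ)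
    (D : Measure ℝ) [IsProbabilityMeasure D] (hlaw : ∀ i l, μ.map (V i l) = D)
    (hsupp : D (Set.Icc (0 : ℝ) 1)ᶜ = 0)
    (hsym : ∀ ε ∈ Set.Icc (0 : ℝ) (1 / 2),
      D {x | x ≤ 1 / 2 - ε} = D {x | 1 / 2 + ε ≤ x})
    (rank : Fin n → Equiv.Perm (Fin m))
    (SW : Fin m → Ω → ℝ)
    (hSW : ∀ j ω, SW j ω =
      ∑ i, orderStat (List.ofFn fun l => V i l ω) (m - (rank i j : ℕ)))
    (w : Fin m)
    (hw : ∀ j, (Finset.univ.filter fun i => ((rank i) j : ℕ) < (m + 1) / 2).card ≤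
      (Finset.univ.filter fun i => ((rank i) w : ℕ) < (m + 1) / 2).card) :
    ∀ j, ∫ ω, SW j ω ∂μ ≤ 3 * ∫ ω, SW w ω ∂μ :=
  stmt13_general μ n m V hindep D hlaw hsupp hsym rank SW hSW w hw
end
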